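/- Let (V, P) be a finite irreducible Markov chain with stationary distribution π, and let f : [0,1] → ℝ be nonnegative and satisfy 0 < f(a) ≤ f(1−a) for all a ∈ (0, 1/2]. Then every eigenvalue λ ∈ ℂ of P, regarded as a complex matrix, with λ ≠ 1 satisfies 1 − |λ| ≥ 1 − C_f, i.e. |λ| ≤ C_f. -/

import Mathlib

/-!
Fold `f` about `1/2`: `f̂(a) = f(min(a, 1 - a))` on `(0, 1)` and `f̂ = 0` at the endpoints,
and let `χ_B = 1_B - π(B)`. By the layer-cake formula every mean-zero `φ` is a nonnegative
combination `∑ c_B χ_B`; let `‖φ‖` be the least cost `∑ c_B f̂(π(B))` of such a combination.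
The time reversal `P̂` sends `χ_B` to `∫₀¹ χ_{B_u} du`, and `∫₀¹ f̂(π(B_u)) du ≤ C_f f̂(π(B))`:
for `π(B) ≤ 1/2` this is the definition of `C_f` together with `f̂ ≤ f`, otherwise pass to `Bᶜ`,
whose evolving sets are those of `B` complemented, at level `1 - u`. Hence `‖P̂φ‖ ≤ C_f ‖φ‖`.

A left eigenvector `v` of `P` for `λ ≠ 1` has mean zero, and `φ_z = Re(z v)/π` satisfies
`P̂ φ_z = φ_{zλ}`; comparing `‖φ_z‖` with its supremum over `|z| = 1` gives `|λ| ≤ C_f`.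

Integrals over the level `u` are handled as finite sums: a function of the superlevel set of `q`
at level `u` integrates to the sum over `T` of its value at `T` times the length of the set of
levels where that superlevel set is `T`.
-/

open scoped Classical

noncomputable section

namespace Stmt9

variable {V : Type*} [Fintype V]

/-- measure of a finite set of states under `pi`. -/
def meas (pi : V → ℝ) (A : Finset V) : ℝ := ∑ x ∈ A, pi x

/-- ergodic flow `Q(A,y) = ∑_{x∈A} π(x)P(x,y)` from a set to a point. -/
def flowPt (P : V → V → ℝ) (pi : V → ℝ) (A : Finset V) (y : V) : ℝ :=
  ∑ x ∈ A, pi x * P x y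

/-- the evolving set `A_u = {y : Q(A,y) ≥ u·π(y)}`. -/
def evolve (P : V → V → ℝ) (pi : V → ℝ) (A : Finset V) (u : ℝ) : Finset V :=
  Finset.univ.filter fun y => u * pi y ≤ flowPt P pi A y

/-- `f`-congestion of a set: `C_f(A) = (∫₀¹ f(π(A_u)) du)/f(π(A))`. -/
def fCong (f : ℝ → ℝ) (P : V → V → ℝ) (pi : V → ℝ) (A : Finset V) : ℝ :=
  (∫ u in (0:ℝ)..1, f (meas pi (evolve P pi A u))) / f (meas pi A)

/-- `C_f = max{C_f(A) : A nonempty, π(A) ≤ 1/2}`. -/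
def fCongMax (f : ℝ → ℝ) (P : V → V → ℝ) (pi : V → ℝ) : ℝ :=
  sSup {c | ∃ A : Finset V, A.Nonempty ∧ meas pi A ≤ 1 / 2 ∧ c = fCong f P pi A}

open MeasureTheory Matrix

def foldHalf (f : ℝ → ℝ) (a : ℝ) : ℝ :=
  if a ∈ Set.Ioo 0 1 then f (min a (1 - a)) else 0

section foldHalf

variable {f : ℝ → ℝ}

lemma foldHalf_one_sub (a : ℝ) : foldHalf f (1 - a) = foldHalf f a := by
  have hmem : 1 - a ∈ Set.Ioo 0 1 ↔ a ∈ Set.Ioo 0 1 := by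
    simp only [Set.mem_Ioo]
    constructor <;> rintro ⟨h₀, h₁⟩ <;> constructor <;> linarith
  simp only [foldHalf, hmem, sub_sub_cancel, min_comm]

@[simp] lemma foldHalf_zero : foldHalf f 0 = 0 := by simp [foldHalf]

@[simp] lemma foldHalf_one : foldHalf f 1 = 0 := by simp [foldHalf]

lemma foldHalf_pos (hf : ∀ a : ℝ, 0 < a → a ≤ 1 / 2 → 0 < f a ∧ f a ≤ f (1 - a))
    {a : ℝ} (ha : a ∈ Set.Ioo 0 1) : 0 < foldHalf f a := by
  rw [foldHalf, if_pos ha]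
  refine (hf _ (lt_min ha.1 (by linarith [ha.2])) (min_le_iff.2 ?_)).1
  by_contra! h
  linarith [h.1, h.2]

lemma foldHalf_nonneg (hf : ∀ a : ℝ, 0 < a → a ≤ 1 / 2 → 0 < f a ∧ f a ≤ f (1 - a))
    (a : ℝ) : 0 ≤ foldHalf f a := by
  by_cases ha : a ∈ Set.Ioo 0 1
  · exact (foldHalf_pos hf ha).le
  · rw [foldHalf, if_neg ha]

lemma foldHalf_of_le_half {a : ℝ} (h₀ : 0 < a) (h : a ≤ 1 / 2) : foldHalf f a = f a := by
  rw [foldHalf, if_pos ⟨h₀, by linarith⟩, min_eq_left (by linarith)]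

lemma foldHalf_le_self (hf0 : ∀ a ∈ Set.Icc (0:ℝ) 1, 0 ≤ f a)
    (hf : ∀ a : ℝ, 0 < a → a ≤ 1 / 2 → 0 < f a ∧ f a ≤ f (1 - a))
    {a : ℝ} (ha : a ∈ Set.Icc 0 1) : foldHalf f a ≤ f a := by
  rw [foldHalf]
  split_ifs with h
  · rcases le_total a (1 - a) with h' | h'
    · rw [min_eq_left h']
    · rw [min_eq_right h']
      simpa using (hf (1 - a) (by linarith [h.2]) (by linarith)).2
  · exact hf0 a ha

end foldHalf

section meas

variable {pi : V → ℝ}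

lemma meas_compl (hpi1 : ∑ x, pi x = 1) (A : Finset V) : meas pi Aᶜ = 1 - meas pi A := by
  rw [meas, meas, ← hpi1, ← Finset.sum_add_sum_compl A pi, add_sub_cancel_left]

lemma meas_mem_Icc (hpi0 : ∀ x, 0 ≤ pi x) (hpi1 : ∑ x, pi x = 1) (A : Finset V) :
    meas pi A ∈ Set.Icc 0 1 :=
  ⟨Finset.sum_nonneg fun x _ => hpi0 x,
    hpi1 ▸ Finset.sum_le_univ_sum_of_nonneg hpi0⟩

lemma meas_mem_Ioo (hpi0 : ∀ x, 0 < pi x) (hpi1 : ∑ x, pi x = 1) {A : Finset V}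
    (hA : A.Nonempty) (hA' : A ≠ Finset.univ) : meas pi A ∈ Set.Ioo 0 1 := by
  have hpos : ∀ B : Finset V, B.Nonempty → 0 < meas pi B := fun B hB =>
    Finset.sum_pos (fun x _ => hpi0 x) hB
  have hcompl := hpos Aᶜ ((Finset.compl_ne_univ_iff_nonempty Aᶜ).1 (by rwa [compl_compl]))
  rw [meas_compl hpi1] at hcompl
  exact ⟨hpos A hA, by linarith⟩

end meas

def superlevel (q : V → ℝ) (u : ℝ) : Finset V := Finset.univ.filter fun y => u ≤ q y

def levelWeight (q : V → ℝ) (a b : ℝ) (T : Finset V) : ℝ :=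
  volume.real ({u | superlevel q u = T} ∩ Set.Ioc a b)

section superlevel

variable {a b : ℝ}

lemma measurableSet_superlevel_eq (q : V → ℝ) (T : Finset V) :
    MeasurableSet {u : ℝ | superlevel q u = T} := by
  have h : {u : ℝ | superlevel q u = T} = ⋂ y, {u | u ≤ q y ↔ y ∈ T} := by
    ext u
    simp [superlevel, Finset.ext_iff]
  rw [h]
  refine MeasurableSet.iInter fun y => ?_
  by_cases hy : y ∈ T
  · convert measurableSet_Iic (a := q y) using 1
    ext u
    simp [hy]
  · convert measurableSet_Ioi (a := q y) using 1
    ext u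
    simp [hy]

lemma levelWeight_nonneg {q : V → ℝ} (T : Finset V) : 0 ≤ levelWeight q a b T :=
  measureReal_nonneg

lemma integral_superlevel_eq_sum (q : V → ℝ) (hab : a ≤ b) (G : Finset V → ℝ) :
    ∫ u in a..b, G (superlevel q u) = ∑ T, levelWeight q a b T * G T := by
  have hG : (fun u => G (superlevel q u))
      = fun u => ∑ T, {u | superlevel q u = T}.indicator (fun _ => G T) u := by
    funext u
    rw [Finset.sum_eq_single (superlevel q u)]
    · exact (Set.indicator_of_mem rfl _).symm
    · exact fun T _ hT => Set.indicator_of_notMem (Ne.symm hT) _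
    · simp
  rw [hG, intervalIntegral.integral_finsetSum]
  · refine Finset.sum_congr rfl fun T _ => ?_
    rw [intervalIntegral.integral_of_le hab, integral_indicator_const _
      (measurableSet_superlevel_eq q T), measureReal_restrict_apply
      (measurableSet_superlevel_eq q T), smul_eq_mul, levelWeight]
  · intro T _
    rw [intervalIntegrable_iff]
    exact (integrableOn_const measure_Ioc_lt_top.ne).indicator (measurableSet_superlevel_eq q T)

lemma sum_levelWeight (q : V → ℝ) (hab : a ≤ b) : ∑ T, levelWeight q a b T = b - a := by
  simpa using (integral_superlevel_eq_sum q hab fun _ => 1).symm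

lemma sum_levelWeight_mul_indicator {q : V → ℝ} {y : V} (hy : q y ∈ Set.Icc a b) :
    ∑ T, levelWeight q a b T * (if y ∈ T then 1 else 0) = q y - a := by
  rw [← integral_superlevel_eq_sum q (hy.1.trans hy.2)]
  have h : (fun u => if y ∈ superlevel q u then (1 : ℝ) else 0)
      = (Set.Iic (q y)).indicator 1 := by
    funext u
    simp [superlevel, Set.indicator]
  rw [h, intervalIntegral.integral_of_le (hy.1.trans hy.2),
    integral_indicator_one measurableSet_Iic, measureReal_restrict_apply measurableSet_Iic,
    Set.Iic_inter_Ioc_of_le hy.2, Real.volume_real_Ioc_of_le hy.1]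

end superlevel

def centeredInd (pi : V → ℝ) (B : Finset V) (y : V) : ℝ :=
  (if y ∈ B then 1 else 0) - meas pi B

lemma sum_levelWeight_smul_centeredInd {pi : V → ℝ} (hpi1 : ∑ x, pi x = 1) {q : V → ℝ}
    {a b : ℝ} (hq : ∀ y, q y ∈ Set.Icc a b) :
    ∑ T, levelWeight q a b T • centeredInd pi T = fun y => q y - ∑ x, pi x * q x := by
  funext y
  have hmeas : ∀ T : Finset V, meas pi T = ∑ x, pi x * (if x ∈ T then 1 else 0) := by
    intro T
    simp [meas]
  have hmean : ∑ T, levelWeight q a b T * meas pi T = ∑ x, pi x * q x - a := by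
    simp_rw [hmeas, Finset.mul_sum]
    rw [Finset.sum_comm]
    simp_rw [mul_left_comm _ (pi _), ← Finset.mul_sum, sum_levelWeight_mul_indicator (hq _),
      mul_sub, Finset.sum_sub_distrib, ← Finset.sum_mul, hpi1, one_mul]
  simp only [Finset.sum_apply, Pi.smul_apply, smul_eq_mul, centeredInd, mul_sub,
    Finset.sum_sub_distrib, sum_levelWeight_mul_indicator (hq y), hmean]
  ring

def flowDensity (P : V → V → ℝ) (pi : V → ℝ) (A : Finset V) (y : V) : ℝ :=
  flowPt P pi A y / pi y

def timeReversal (P : V → V → ℝ) (pi : V → ℝ) : Matrix V V ℝ :=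
  Matrix.of fun y x => pi x * P x y / pi y

section flow

variable {P : V → V → ℝ} {pi : V → ℝ}

lemma evolve_eq_superlevel (hpi0 : ∀ x, 0 < pi x) (A : Finset V) (u : ℝ) :
    evolve P pi A u = superlevel (flowDensity P pi A) u := by
  ext y
  simp only [evolve, superlevel, Finset.mem_filter, Finset.mem_univ, true_and]
  rw [flowDensity, le_div_iff₀ (hpi0 y)]

lemma integral_evolve_eq_sum (hpi0 : ∀ x, 0 < pi x) (A : Finset V) (G : Finset V → ℝ) :
    ∫ u in (0:ℝ)..1, G (evolve P pi A u)
      = ∑ T, levelWeight (flowDensity P pi A) 0 1 T * G T := by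
  simp_rw [evolve_eq_superlevel hpi0]
  exact integral_superlevel_eq_sum _ zero_le_one G

lemma flowDensity_mem_Icc (hP0 : ∀ x y, 0 ≤ P x y) (hpi0 : ∀ x, 0 < pi x)
    (hstat : ∀ y, ∑ x, pi x * P x y = pi y) (A : Finset V) (y : V) :
    flowDensity P pi A y ∈ Set.Icc 0 1 := by
  have hterm : ∀ x, 0 ≤ pi x * P x y := fun x => mul_nonneg (hpi0 x).le (hP0 x y)
  refine ⟨div_nonneg (Finset.sum_nonneg fun x _ => hterm x) (hpi0 y).le, ?_⟩
  rw [flowDensity, div_le_one (hpi0 y), ← hstat y]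
  exact Finset.sum_le_univ_sum_of_nonneg hterm

lemma flowDensity_compl (hpi0 : ∀ x, 0 < pi x) (hstat : ∀ y, ∑ x, pi x * P x y = pi y)
    (A : Finset V) (y : V) : flowDensity P pi Aᶜ y = 1 - flowDensity P pi A y := by
  rw [flowDensity, flowDensity, flowPt, flowPt, eq_sub_iff_add_eq, ← add_div,
    Finset.sum_compl_add_sum, hstat, div_self (hpi0 y).ne']

lemma sum_mul_flowDensity (hpi0 : ∀ x, 0 < pi x) (hP1 : ∀ x, ∑ y, P x y = 1) (A : Finset V) :
    ∑ y, pi y * flowDensity P pi A y = meas pi A := by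
  simp_rw [flowDensity, mul_div_cancel₀ _ (hpi0 _).ne', flowPt]
  rw [Finset.sum_comm]
  simp_rw [← Finset.mul_sum, hP1, mul_one, meas]

lemma timeReversal_mulVec_centeredInd (hpi0 : ∀ x, 0 < pi x)
    (hstat : ∀ y, ∑ x, pi x * P x y = pi y) (B : Finset V) :
    timeReversal P pi *ᵥ centeredInd pi B = fun y => flowDensity P pi B y - meas pi B := by
  funext y
  simp only [Matrix.mulVec, dotProduct, timeReversal, Matrix.of_apply, centeredInd, mul_sub,
    Finset.sum_sub_distrib, mul_ite, mul_one, mul_zero, Finset.sum_ite_mem, Finset.univ_inter,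
    ← Finset.sum_mul, ← Finset.sum_div, hstat, div_self (hpi0 y).ne', one_mul]
  rfl

lemma timeReversal_mulVec_centeredInd_eq_sum (hP0 : ∀ x y, 0 ≤ P x y) (hpi0 : ∀ x, 0 < pi x)
    (hpi1 : ∑ x, pi x = 1) (hP1 : ∀ x, ∑ y, P x y = 1)
    (hstat : ∀ y, ∑ x, pi x * P x y = pi y) (B : Finset V) :
    timeReversal P pi *ᵥ centeredInd pi B
      = ∑ T, levelWeight (flowDensity P pi B) 0 1 T • centeredInd pi T := by
  rw [sum_levelWeight_smul_centeredInd hpi1 (flowDensity_mem_Icc hP0 hpi0 hstat B),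
    sum_mul_flowDensity hpi0 hP1, timeReversal_mulVec_centeredInd hpi0 hstat]

end flow

section congestion

variable {P : V → V → ℝ} {pi : V → ℝ} {f : ℝ → ℝ}

lemma fCong_le_fCongMax {A : Finset V} (hA : A.Nonempty) (hA' : meas pi A ≤ 1 / 2) :
    fCong f P pi A ≤ fCongMax f P pi :=
  le_csSup ((Set.finite_range (fCong f P pi)).bddAbove.mono
    (by rintro _ ⟨B, -, -, rfl⟩; exact ⟨B, rfl⟩)) ⟨A, hA, hA', rfl⟩

lemma fCongMax_nonneg (hpi0 : ∀ x, 0 < pi x) (hpi1 : ∑ x, pi x = 1)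
    (hf0 : ∀ a ∈ Set.Icc (0:ℝ) 1, 0 ≤ f a)
    (hf : ∀ a : ℝ, 0 < a → a ≤ 1 / 2 → 0 < f a ∧ f a ≤ f (1 - a)) :
    0 ≤ fCongMax f P pi := by
  refine Real.sSup_nonneg ?_
  rintro _ ⟨A, hA, hA', rfl⟩
  refine div_nonneg (intervalIntegral.integral_nonneg zero_le_one fun u _ =>
    hf0 _ (meas_mem_Icc (fun x => (hpi0 x).le) hpi1 _)) (hf _ ?_ hA').1.le
  exact Finset.sum_pos (fun x _ => hpi0 x) hA

lemma integral_foldHalf_evolve_empty (hpi0 : ∀ x, 0 < pi x) (hpi1 : ∑ x, pi x = 1) :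
    ∫ u in (0:ℝ)..1, foldHalf f (meas pi (evolve P pi ∅ u)) = 0 := by
  have h : ∀ u, foldHalf f (meas pi (evolve P pi ∅ u)) = 0 := by
    intro u
    have hflow : flowDensity P pi ∅ = 0 := by
      funext y
      simp [flowDensity, flowPt]
    rw [evolve_eq_superlevel hpi0, hflow, superlevel]
    simp only [Pi.zero_apply, Finset.filter_const]
    split_ifs
    · rw [meas, hpi1, foldHalf_one]
    · rw [meas, Finset.sum_empty, foldHalf_zero]
  simp [h]

/-- Evolving sets of the complement are a.e. complements of evolving sets at level `1 - u`. -/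
lemma integral_foldHalf_evolve_compl (hpi0 : ∀ x, 0 < pi x) (hpi1 : ∑ x, pi x = 1)
    (hstat : ∀ y, ∑ x, pi x * P x y = pi y) (B : Finset V) :
    ∫ u in (0:ℝ)..1, foldHalf f (meas pi (evolve P pi Bᶜ u))
      = ∫ u in (0:ℝ)..1, foldHalf f (meas pi (evolve P pi B u)) := by
  have hsub : ∫ u in (0:ℝ)..1, foldHalf f (meas pi (evolve P pi B (1 - u)))
      = ∫ u in (0:ℝ)..1, foldHalf f (meas pi (evolve P pi B u)) := by
    simp [intervalIntegral.integral_comp_sub_left (fun u => foldHalf f (meas pi (evolve P pi B u)))]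
  rw [← hsub]
  refine intervalIntegral.integral_congr_ae ?_
  have hnull : volume (Set.range fun y => 1 - flowDensity P pi B y) = 0 :=
    (Set.finite_range _).measure_zero _
  filter_upwards [measure_eq_zero_iff_ae_notMem.1 hnull] with u hu _
  have hcompl : evolve P pi Bᶜ u = (evolve P pi B (1 - u))ᶜ := by
    ext y
    have hy : flowDensity P pi B y ≠ 1 - u := fun h => hu ⟨y, by linarith⟩
    simp only [evolve_eq_superlevel hpi0, superlevel, Finset.mem_compl, Finset.mem_filter,
      Finset.mem_univ, true_and, flowDensity_compl hpi0 hstat, not_le]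
    exact ⟨fun h => lt_of_le_of_ne (by linarith) hy, fun h => by linarith⟩
  rw [hcompl, meas_compl hpi1, foldHalf_one_sub]

lemma integral_foldHalf_evolve_le (hpi0 : ∀ x, 0 < pi x) (hpi1 : ∑ x, pi x = 1)
    (hstat : ∀ y, ∑ x, pi x * P x y = pi y) (hf0 : ∀ a ∈ Set.Icc (0:ℝ) 1, 0 ≤ f a)
    (hf : ∀ a : ℝ, 0 < a → a ≤ 1 / 2 → 0 < f a ∧ f a ≤ f (1 - a)) (B : Finset V) :
    ∫ u in (0:ℝ)..1, foldHalf f (meas pi (evolve P pi B u))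
      ≤ fCongMax f P pi * foldHalf f (meas pi B) := by
  wlog hB : meas pi B ≤ 1 / 2 generalizing B
  · have h := this Bᶜ (by rw [meas_compl hpi1]; linarith)
    rwa [integral_foldHalf_evolve_compl hpi0 hpi1 hstat, meas_compl hpi1, foldHalf_one_sub] at h
  rcases B.eq_empty_or_nonempty with rfl | hne
  · rw [integral_foldHalf_evolve_empty hpi0 hpi1]
    simp [meas]
  have hBpos : 0 < meas pi B := Finset.sum_pos (fun x _ => hpi0 x) hne
  have hpos : 0 < f (meas pi B) := (hf _ hBpos hB).1
  calc ∫ u in (0:ℝ)..1, foldHalf f (meas pi (evolve P pi B u))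
      = ∑ T, levelWeight (flowDensity P pi B) 0 1 T * foldHalf f (meas pi T) :=
        integral_evolve_eq_sum hpi0 B fun T => foldHalf f (meas pi T)
    _ ≤ ∑ T, levelWeight (flowDensity P pi B) 0 1 T * f (meas pi T) := by
        gcongr with T
        · exact levelWeight_nonneg T
        · exact foldHalf_le_self hf0 hf (meas_mem_Icc (fun x => (hpi0 x).le) hpi1 T)
    _ = fCong f P pi B * f (meas pi B) := by
        rw [← integral_evolve_eq_sum hpi0, fCong, div_mul_cancel₀ _ hpos.ne']
    _ ≤ fCongMax f P pi * f (meas pi B) := by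
        gcongr
        exact fCong_le_fCongMax hne hB
    _ = fCongMax f P pi * foldHalf f (meas pi B) := by
        rw [foldHalf_of_le_half hBpos hB]

end congestion

def atomicWeights (pi : V → ℝ) (f : ℝ → ℝ) (φ : V → ℝ) : Set ℝ :=
  {w | ∃ c : Finset V → ℝ, (∀ B, 0 ≤ c B) ∧ φ = ∑ B, c B • centeredInd pi B ∧
    w = ∑ B, c B * foldHalf f (meas pi B)}

def atomicNorm (pi : V → ℝ) (f : ℝ → ℝ) (φ : V → ℝ) : ℝ :=
  sInf (atomicWeights pi f φ)

section atomicNorm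

variable {P : V → V → ℝ} {pi : V → ℝ} {f : ℝ → ℝ}

lemma atomicNorm_le (hf : ∀ a : ℝ, 0 < a → a ≤ 1 / 2 → 0 < f a ∧ f a ≤ f (1 - a))
    {φ : V → ℝ} {w : ℝ} (hw : w ∈ atomicWeights pi f φ) : atomicNorm pi f φ ≤ w := by
  refine csInf_le ⟨0, ?_⟩ hw
  rintro _ ⟨c, hc, -, rfl⟩
  exact Finset.sum_nonneg fun B _ => mul_nonneg (hc B) (foldHalf_nonneg hf _)

lemma sum_mem_atomicWeights {ι : Type*} (s : Finset ι) {c : ι → ℝ} (hc : ∀ i, 0 ≤ c i)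
    {ψ : ι → V → ℝ} {w : ι → ℝ} (hw : ∀ i, w i ∈ atomicWeights pi f (ψ i)) :
    ∑ i ∈ s, c i * w i ∈ atomicWeights pi f (∑ i ∈ s, c i • ψ i) := by
  choose d hd hdψ hdw using hw
  refine ⟨fun B => ∑ i ∈ s, c i * d i B,
    fun B => Finset.sum_nonneg fun i _ => mul_nonneg (hc i) (hd i B), ?_, ?_⟩
  · simp only [hdψ, Finset.smul_sum, smul_smul, Finset.sum_smul]
    exact Finset.sum_comm
  · simp only [hdw, Finset.mul_sum, Finset.sum_mul, mul_assoc]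
    exact Finset.sum_comm

lemma atomicNorm_smul_le (hf : ∀ a : ℝ, 0 < a → a ≤ 1 / 2 → 0 < f a ∧ f a ≤ f (1 - a))
    {φ : V → ℝ} (hφ : (atomicWeights pi f φ).Nonempty) {r : ℝ} (hr : 0 ≤ r) :
    atomicNorm pi f (r • φ) ≤ r * atomicNorm pi f φ := by
  unfold atomicNorm
  rw [← smul_eq_mul, ← Real.sInf_smul_of_nonneg hr]
  refine le_csInf hφ.smul_set ?_
  rintro _ ⟨w, hw, rfl⟩
  refine atomicNorm_le hf ?_
  simpa using sum_mem_atomicWeights (ι := Unit) Finset.univ (fun _ => hr) fun _ => hw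

/-- Only proper nonempty `B` need a lower bound on their cost, since `χ_∅ = χ_V = 0`. -/
lemma le_atomicNorm (hpi0 : ∀ x, 0 < pi x) (hpi1 : ∑ x, pi x = 1) {ε : ℝ} (hε : 0 ≤ ε)
    (hεle : ∀ B : Finset V, B.Nonempty → B ≠ Finset.univ → ε ≤ foldHalf f (meas pi B))
    {φ : V → ℝ} (hφ : (atomicWeights pi f φ).Nonempty) (y : V) :
    ε * φ y ≤ atomicNorm pi f φ := by
  refine le_csInf hφ ?_
  rintro _ ⟨c, hc, rfl, rfl⟩
  simp only [Finset.sum_apply, Pi.smul_apply, smul_eq_mul, Finset.mul_sum]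
  refine Finset.sum_le_sum fun B _ => ?_
  rw [mul_left_comm]
  refine mul_le_mul_of_nonneg_left ?_ (hc B)
  rcases B.eq_empty_or_nonempty with rfl | hne
  · simp [centeredInd, meas]
  by_cases huniv : B = Finset.univ
  · subst huniv
    simp [centeredInd, meas, hpi1]
  calc ε * centeredInd pi B y ≤ ε * 1 := by
        refine mul_le_mul_of_nonneg_left ?_ hε
        have := (meas_mem_Icc (fun x => (hpi0 x).le) hpi1 B).1
        unfold centeredInd
        split_ifs <;> linarith
    _ ≤ foldHalf f (meas pi B) := by simpa using hεle B hne huniv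

lemma exists_pos_le_foldHalf_meas (hpi0 : ∀ x, 0 < pi x) (hpi1 : ∑ x, pi x = 1)
    (hf : ∀ a : ℝ, 0 < a → a ≤ 1 / 2 → 0 < f a ∧ f a ≤ f (1 - a)) :
    ∃ ε > 0, ∀ B : Finset V, B.Nonempty → B ≠ Finset.univ →
      ε ≤ foldHalf f (meas pi B) := by
  set S := Finset.univ.filter fun B : Finset V => B.Nonempty ∧ B ≠ Finset.univ
  rcases S.eq_empty_or_nonempty with hS | hS
  · refine ⟨1, one_pos, fun B hB hB' => ?_⟩
    have : B ∈ S := by simp [S, hB, hB']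
    simp [hS] at this
  obtain ⟨B₀, hB₀, hmin⟩ := S.exists_min_image (fun B => foldHalf f (meas pi B)) hS
  simp only [S, Finset.mem_filter, Finset.mem_univ, true_and] at hB₀ hmin
  exact ⟨_, foldHalf_pos hf (meas_mem_Ioo hpi0 hpi1 hB₀.1 hB₀.2),
    fun B hB hB' => hmin B ⟨hB, hB'⟩⟩

lemma exists_mem_atomicWeights_le (hpi1 : ∑ x, pi x = 1) {K : ℝ}
    (hK : ∀ B : Finset V, foldHalf f (meas pi B) ≤ K) {φ : V → ℝ}
    (hφ : ∑ y, pi y * φ y = 0) {H : ℝ} (hH : 0 ≤ H) (hφH : ∀ y, |φ y| ≤ H) :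
    ∃ w ∈ atomicWeights pi f φ, w ≤ 2 * H * K := by
  refine ⟨∑ T, levelWeight φ (-H) H T * foldHalf f (meas pi T),
    ⟨_, levelWeight_nonneg, ?_, rfl⟩, ?_⟩
  · rw [sum_levelWeight_smul_centeredInd hpi1 fun y => abs_le.1 (hφH y), hφ]
    simp
  · calc ∑ T, levelWeight φ (-H) H T * foldHalf f (meas pi T)
        ≤ ∑ T, levelWeight φ (-H) H T * K := by
          gcongr with T
          · exact levelWeight_nonneg T
          · exact hK T
      _ = 2 * H * K := by
          rw [← Finset.sum_mul, sum_levelWeight φ (by linarith)]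
          ring

lemma atomicNorm_timeReversal_le (hP0 : ∀ x y, 0 ≤ P x y) (hpi0 : ∀ x, 0 < pi x)
    (hpi1 : ∑ x, pi x = 1) (hP1 : ∀ x, ∑ y, P x y = 1)
    (hstat : ∀ y, ∑ x, pi x * P x y = pi y) (hf0 : ∀ a ∈ Set.Icc (0:ℝ) 1, 0 ≤ f a)
    (hf : ∀ a : ℝ, 0 < a → a ≤ 1 / 2 → 0 < f a ∧ f a ≤ f (1 - a))
    {φ : V → ℝ} (hφ : (atomicWeights pi f φ).Nonempty) :
    atomicNorm pi f (timeReversal P pi *ᵥ φ) ≤ fCongMax f P pi * atomicNorm pi f φ := by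
  unfold atomicNorm
  rw [← smul_eq_mul, ← Real.sInf_smul_of_nonneg (fCongMax_nonneg hpi0 hpi1 hf0 hf)]
  refine le_csInf hφ.smul_set ?_
  rintro _ ⟨_, ⟨c, hc, rfl, rfl⟩, rfl⟩
  have hatom : ∀ B, ∑ T, levelWeight (flowDensity P pi B) 0 1 T * foldHalf f (meas pi T)
      ∈ atomicWeights pi f (timeReversal P pi *ᵥ centeredInd pi B) := fun B =>
    ⟨_, levelWeight_nonneg,
      timeReversal_mulVec_centeredInd_eq_sum hP0 hpi0 hpi1 hP1 hstat B, rfl⟩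
  have hmem := sum_mem_atomicWeights Finset.univ hc hatom
  simp only [← Matrix.mulVec_smul, ← Matrix.mulVec_sum] at hmem
  refine (atomicNorm_le hf hmem).trans ?_
  beta_reduce
  rw [smul_eq_mul, Finset.mul_sum]
  refine Finset.sum_le_sum fun B _ => ?_
  rw [mul_left_comm, ← integral_evolve_eq_sum hpi0 B fun T => foldHalf f (meas pi T)]
  exact mul_le_mul_of_nonneg_left (integral_foldHalf_evolve_le hpi0 hpi1 hstat hf0 hf B) (hc B)

end atomicNorm

section eigenvector

lemma exists_vecMul_eq_smul {n K : Type*} [Fintype n] [DecidableEq n] [Field K]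
    {M : Matrix n n K} {lam : K} (h : ∃ g : n → K, g ≠ 0 ∧ M *ᵥ g = lam • g) :
    ∃ v : n → K, v ≠ 0 ∧ v ᵥ* M = lam • v := by
  obtain ⟨g, hg, hMg⟩ := h
  have hdet : (M - lam • 1).det = 0 := Matrix.exists_mulVec_eq_zero_iff.1
    ⟨g, hg, by rw [Matrix.sub_mulVec, Matrix.smul_mulVec, Matrix.one_mulVec, hMg, sub_self]⟩
  obtain ⟨v, hv, hvM⟩ := Matrix.exists_vecMul_eq_zero_iff.2 hdet
  refine ⟨v, hv, ?_⟩
  rwa [Matrix.vecMul_sub, Matrix.vecMul_smul, Matrix.vecMul_one, sub_eq_zero] at hvM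

lemma sum_eq_zero_of_vecMul_eq_smul {n K : Type*} [Fintype n] [Field K] {M : Matrix n n K}
    (hM : ∀ x, ∑ y, M x y = 1) {lam : K} (hlam : lam ≠ 1) {v : n → K}
    (hv : v ᵥ* M = lam • v) : ∑ x, v x = 0 := by
  have hsum : lam * ∑ x, v x = ∑ x, v x := by
    calc lam * ∑ x, v x = ∑ y, (v ᵥ* M) y := by simp [hv, Finset.mul_sum]
      _ = ∑ x, v x := by
        simp only [Matrix.vecMul, dotProduct]
        rw [Finset.sum_comm]
        simp [← Finset.mul_sum, hM]
  have : (lam - 1) * ∑ x, v x = 0 := by linear_combination hsum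
  exact (mul_eq_zero.1 this).resolve_left (sub_ne_zero.2 hlam)

end eigenvector

def reDensity (pi : V → ℝ) (v : V → ℂ) (z : ℂ) (y : V) : ℝ := (z * v y).re / pi y

section reDensity

variable {pi : V → ℝ} {v : V → ℂ}

omit [Fintype V] in
lemma reDensity_ofReal_mul (r : ℝ) (z : ℂ) :
    reDensity pi v (r * z) = r • reDensity pi v z := by
  funext y
  simp only [reDensity, mul_assoc, Complex.re_ofReal_mul, Pi.smul_apply, smul_eq_mul, mul_div_assoc]

lemma timeReversal_mulVec_reDensity {P : V → V → ℝ} (hpi0 : ∀ x, 0 < pi x) {lam : ℂ}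
    (hv : v ᵥ* (Matrix.of P).map (↑) = lam • v) (z : ℂ) :
    timeReversal P pi *ᵥ reDensity pi v z = reDensity pi v (z * lam) := by
  funext y
  have hvy : lam * v y = ∑ x, v x * P x y := (congrFun hv y).symm
  simp only [Matrix.mulVec, dotProduct, timeReversal, Matrix.of_apply, reDensity, mul_assoc, hvy,
    Finset.mul_sum, Complex.re_sum]
  rw [Finset.sum_div]
  refine Finset.sum_congr rfl fun x _ => ?_
  rw [← mul_assoc, Complex.re_mul_ofReal]
  field_simp [(hpi0 x).ne']

lemma sum_mul_reDensity (hpi0 : ∀ x, 0 < pi x) (hv : ∑ x, v x = 0) (z : ℂ) :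
    ∑ y, pi y * reDensity pi v z y = 0 := by
  simp_rw [reDensity, mul_div_cancel₀ _ (hpi0 _).ne', ← Complex.re_sum, ← Finset.mul_sum, hv,
    mul_zero, Complex.zero_re]

lemma abs_reDensity_le (hpi0 : ∀ x, 0 < pi x) (z : ℂ) (y : V) :
    |reDensity pi v z y| ≤ ‖z‖ * ∑ x, ‖v x‖ / pi x := by
  rw [reDensity, abs_div, abs_of_pos (hpi0 y)]
  calc |(z * v y).re| / pi y ≤ ‖z‖ * (‖v y‖ / pi y) := by
        rw [← mul_div_assoc, ← norm_mul]
        gcongr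
        · exact (hpi0 y).le
        · exact Complex.abs_re_le_norm _
    _ ≤ ‖z‖ * ∑ x, ‖v x‖ / pi x := by
        gcongr
        exact Finset.single_le_sum (fun x _ => div_nonneg (norm_nonneg _) (hpi0 x).le)
          (Finset.mem_univ y)

omit [Fintype V] in
lemma exists_reDensity_pos (hpi0 : ∀ x, 0 < pi x) (hv : v ≠ 0) :
    ∃ z : ℂ, ‖z‖ = 1 ∧ ∃ y, 0 < reDensity pi v z y := by
  obtain ⟨y, hy⟩ := Function.ne_iff.1 hv
  have hnorm : 0 < ‖v y‖ := norm_pos_iff.2 hy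
  refine ⟨star (v y) / ‖v y‖, by simp [hnorm.ne'], y, div_pos ?_ (hpi0 y)⟩
  rw [div_mul_eq_mul_div, Complex.star_def, Complex.conj_mul', ← Complex.ofReal_pow,
    ← Complex.ofReal_div, Complex.ofReal_re]
  positivity

end reDensity

/-- For `|w| = 1`, `|λ| S(w) ≤ S(|λ| w) = S(z λ) ≤ C S(z)` with `z = |λ| w / λ` on the unit
circle, so `|λ| sup S ≤ C sup S`. -/
lemma norm_le_of_forall_mul_le {S : ℂ → ℝ} {lam : ℂ} {C : ℝ} (hC : 0 ≤ C)
    (hhom : ∀ (r : ℝ) (z : ℂ), 0 < r → S (r * z) ≤ r * S z)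
    (hcontr : ∀ z, S (z * lam) ≤ C * S z) (hbdd : BddAbove (S '' {z | ‖z‖ = 1}))
    (hpos : ∃ z, ‖z‖ = 1 ∧ 0 < S z) : ‖lam‖ ≤ C := by
  rcases eq_or_ne lam 0 with rfl | hlam
  · simpa using hC
  obtain ⟨z₀, hz₀, hS₀⟩ := hpos
  set M := sSup (S '' {z | ‖z‖ = 1})
  have hM : 0 < M := hS₀.trans_le (le_csSup hbdd ⟨z₀, hz₀, rfl⟩)
  have hnorm : 0 < ‖lam‖ := norm_pos_iff.2 hlam
  have key : ∀ w : ℂ, ‖w‖ = 1 → ‖lam‖ * S w ≤ C * M := by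
    intro w hw
    have hz : ‖(‖lam‖ : ℂ) * w / lam‖ = 1 := by simp [hw, hnorm.ne']
    have hrot : S (‖lam‖ * w) ≤ C * M := by
      rw [show (‖lam‖ : ℂ) * w = (‖lam‖ * w / lam) * lam by field_simp]
      exact (hcontr _).trans (mul_le_mul_of_nonneg_left (le_csSup hbdd ⟨_, hz, rfl⟩) hC)
    have hscale := hhom ‖lam‖⁻¹ (‖lam‖ * w) (inv_pos.2 hnorm)
    rw [← mul_assoc, ← Complex.ofReal_mul, inv_mul_cancel₀ hnorm.ne', Complex.ofReal_one,
      one_mul] at hscale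
    calc ‖lam‖ * S w ≤ ‖lam‖ * (‖lam‖⁻¹ * S (‖lam‖ * w)) := by gcongr
      _ = S (‖lam‖ * w) := by field_simp
      _ ≤ C * M := hrot
  have hMle : ‖lam‖ * M ≤ C * M := by
    rw [← smul_eq_mul, ← Real.sSup_smul_of_nonneg hnorm.le]
    refine csSup_le (Set.Nonempty.smul_set ⟨S z₀, z₀, hz₀, rfl⟩) ?_
    rintro _ ⟨_, ⟨w, hw, rfl⟩, rfl⟩
    exact key w hw
  exact le_of_mul_le_mul_right hMle hM

theorem stmt9_general {V : Type*} [Fintype V] (P : V → V → ℝ) (pi : V → ℝ)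
    (hP0 : ∀ x y, 0 ≤ P x y) (hP1 : ∀ x, ∑ y, P x y = 1)
    (hpi0 : ∀ x, 0 < pi x) (hpi1 : ∑ x, pi x = 1)
    (hstat : ∀ y, ∑ x, pi x * P x y = pi y)
    (f : ℝ → ℝ) (hf0 : ∀ a ∈ Set.Icc (0:ℝ) 1, 0 ≤ f a)
    (hf : ∀ a : ℝ, 0 < a → a ≤ 1 / 2 → 0 < f a ∧ f a ≤ f (1 - a))
    (lam : ℂ) (hlam : lam ≠ 1)
    (hev : ∃ g : V → ℂ, g ≠ 0 ∧ ∀ x, ∑ y, (P x y : ℂ) * g y = lam * g x) :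
    ‖lam‖ ≤ fCongMax f P pi := by
  obtain ⟨g, hg, hPg⟩ := hev
  obtain ⟨v, hv0, hv⟩ :=
    exists_vecMul_eq_smul (M := (Matrix.of P).map ((↑) : ℝ → ℂ)) ⟨g, hg, funext hPg⟩
  have hsum : ∑ x, v x = 0 :=
    sum_eq_zero_of_vecMul_eq_smul (fun x => by simpa using congrArg ((↑) : ℝ → ℂ) (hP1 x))
      hlam hv
  obtain ⟨K, hK⟩ := (Set.finite_range fun B : Finset V => foldHalf f (meas pi B)).bddAbove
  obtain ⟨ε, hε, hεle⟩ := exists_pos_le_foldHalf_meas hpi0 hpi1 hf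
  set H := ∑ x, ‖v x‖ / pi x
  have hH : 0 ≤ H := Finset.sum_nonneg fun x _ => div_nonneg (norm_nonneg _) (hpi0 x).le
  have hrep : ∀ z, ∃ w ∈ atomicWeights pi f (reDensity pi v z), w ≤ 2 * (‖z‖ * H) * K :=
    fun z => exists_mem_atomicWeights_le hpi1 (fun B => hK ⟨B, rfl⟩)
      (sum_mul_reDensity hpi0 hsum z) (mul_nonneg (norm_nonneg z) hH) (abs_reDensity_le hpi0 z)
  have hne : ∀ z, (atomicWeights pi f (reDensity pi v z)).Nonempty := fun z =>
    let ⟨w, hw, _⟩ := hrep z; ⟨w, hw⟩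
  refine norm_le_of_forall_mul_le (S := fun z => atomicNorm pi f (reDensity pi v z))
    (fCongMax_nonneg hpi0 hpi1 hf0 hf) (fun r z hr => ?_) (fun z => ?_) ?_ ?_
  · simpa only [reDensity_ofReal_mul] using atomicNorm_smul_le hf (hne z) hr.le
  · rw [← timeReversal_mulVec_reDensity hpi0 hv]
    exact atomicNorm_timeReversal_le hP0 hpi0 hpi1 hP1 hstat hf0 hf (hne z)
  · refine ⟨2 * (1 * H) * K, ?_⟩
    rintro _ ⟨z, hz, rfl⟩
    obtain ⟨w, hw, hwle⟩ := hrep z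
    exact (atomicNorm_le hf hw).trans (hz ▸ hwle)
  · obtain ⟨z, hz, y, hy⟩ := exists_reDensity_pos hpi0 hv0
    exact ⟨z, hz, (mul_pos hε hy).trans_le (le_atomicNorm hpi0 hpi1 hε.le hεle (hne z) y)⟩

/-- Every complex eigenvalue `λ ≠ 1` of a finite irreducible Markov chain
satisfies `|λ| ≤ C_f`, for `f` nonnegative on `[0,1]` with
`0 < f(a) ≤ f(1−a)` on `(0,1/2]`. -/
theorem stmt9 {V : Type*} [Fintype V] [Nonempty V] (P : V → V → ℝ) (pi : V → ℝ)
    (hP0 : ∀ x y, 0 ≤ P x y) (hP1 : ∀ x, ∑ y, P x y = 1)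
    (hirr : ∀ x y : V, ∃ t : ℕ, 0 < (Matrix.of P ^ t) x y)
    (hpi0 : ∀ x, 0 < pi x) (hpi1 : ∑ x, pi x = 1)
    (hstat : ∀ y, ∑ x, pi x * P x y = pi y)
    (f : ℝ → ℝ) (hf0 : ∀ a ∈ Set.Icc (0:ℝ) 1, 0 ≤ f a)
    (hf : ∀ a : ℝ, 0 < a → a ≤ 1 / 2 → 0 < f a ∧ f a ≤ f (1 - a))
    (lam : ℂ) (hlam : lam ≠ 1)
    (hev : ∃ g : V → ℂ, g ≠ 0 ∧ ∀ x, ∑ y, (P x y : ℂ) * g y = lam * g x) :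
    ‖lam‖ ≤ fCongMax f P pi :=
  stmt9_general P pi hP0 hP1 hpi0 hpi1 hstat f hf0 hf lam hlam hev

end Stmt9
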